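/- arXiv:2102.00180 — 12 statements merged into one kernel-verified Lean document; each statement's English description precedes it below -/
import Mathlib

section
/- Let (Ω, F, P) be a probability space, N ≥ 1 an integer, and c, z_max, d_max real constants. For each t ∈ ℕ let z_1(t), …, z_N(t) and d(t) be real random variables with |z_n(t)| ≤ z_max and |d(t)| ≤ d_max pointwise and with E[d(t)] = c for every t. Define the virtual queue Q : ℕ → (Ω → ℝ) pathwise by Q(0) = 0 and Q(t+1) = max{Q(t) + Σ_{n=1}^N z_n(t) − d(t), 0}. If lim_{T→∞} E[Q(T)]/T = 0, then limsup_{T→∞} (1/T) Σ_{t=0}^{T−1} Σ_{n=1}^N E[z_n(t)] ≤ c. -/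
open MeasureTheory Filter

/-- If the virtual queue `Q` (driven by resource consumptions `z n t` and budget process `d t`
with constant mean `c`) satisfies `E[Q(T)]/T → 0`, then the time-average total resource
consumption is at most `c`. -/
theorem stmt0
    {Ω : Type*} [MeasurableSpace Ω] (P : Measure Ω) [IsProbabilityMeasure P]
    (N : ℕ) (hN : 1 ≤ N) (c zmax dmax : ℝ)
    (z : ℕ → Fin N → Ω → ℝ) (d : ℕ → Ω → ℝ)
    (hzmeas : ∀ t n, Measurable (z t n))
    (hdmeas : ∀ t, Measurable (d t))
    (hzbdd : ∀ t n ω, |z t n ω| ≤ zmax)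
    (hdbdd : ∀ t ω, |d t ω| ≤ dmax)
    (hdmean : ∀ t, ∫ ω, d t ω ∂P = c)
    (Q : ℕ → Ω → ℝ)
    (hQ0 : ∀ ω, Q 0 ω = 0)
    (hQrec : ∀ t ω, Q (t + 1) ω = max (Q t ω + (∑ n, z t n ω) - d t ω) 0)
    (hQlim : Tendsto (fun T : ℕ => (∫ ω, Q T ω ∂P) / (T : ℝ)) atTop (nhds 0)) :
    limsup (fun T : ℕ =>
      (1 / (T : ℝ)) * ∑ t ∈ Finset.range T, ∑ n, ∫ ω, z t n ω ∂P) atTop ≤ c := by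
  have zint : ∀ t n, Integrable (z t n) P := fun t n =>
    ⟨(hzmeas t n).aestronglyMeasurable,
      HasFiniteIntegral.of_bounded (C := zmax)
        (Filter.Eventually.of_forall fun ω => by
          simpa [Real.norm_eq_abs] using hzbdd t n ω)⟩
  have dint : ∀ t, Integrable (d t) P := fun t =>
    ⟨(hdmeas t).aestronglyMeasurable,
      HasFiniteIntegral.of_bounded (C := dmax)
        (Filter.Eventually.of_forall fun ω => by
          simpa [Real.norm_eq_abs] using hdbdd t ω)⟩
  have Qint : ∀ T, Integrable (Q T) P := by
    intro T
    induction T with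
    | zero =>
      rw [show Q 0 = fun _ => (0 : ℝ) from funext hQ0]
      exact integrable_const 0
    | succ t ih =>
      rw [show Q (t + 1) = fun ω => max (Q t ω + (∑ n, z t n ω) - d t ω) 0 from
        funext (hQrec t)]
      exact ((ih.add (integrable_finset_sum _ fun n _ => zint t n)).sub (dint t)).pos_part
  have hpt : ∀ T ω, ∑ t ∈ Finset.range T, ((∑ n, z t n ω) - d t ω) ≤ Q T ω := by
    intro T ω
    induction T with
    | zero => simp [hQ0]
    | succ t ih =>
      rw [Finset.sum_range_succ, hQrec t ω]
      refine le_trans ?_ (le_max_left _ _)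
      linarith
  have hterm : ∀ t, Integrable (fun ω => (∑ n, z t n ω) - d t ω) P := fun t =>
    (integrable_finset_sum _ fun n _ => zint t n).sub (dint t)
  have hEbound : ∀ T : ℕ,
      (∑ t ∈ Finset.range T, ∑ n, ∫ ω, z t n ω ∂P) - T * c ≤ ∫ ω, Q T ω ∂P := by
    intro T
    have hmono := integral_mono (integrable_finset_sum _ fun t _ => hterm t) (Qint T)
      (fun ω => hpt T ω)
    rw [integral_finset_sum _ fun t _ => hterm t] at hmono
    have hterm' : ∀ t, ∫ ω, ((∑ n, z t n ω) - d t ω) ∂P = (∑ n, ∫ ω, z t n ω ∂P) - c := by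
      intro t
      rw [integral_sub (integrable_finset_sum _ fun n _ => zint t n) (dint t),
        integral_finset_sum _ fun n _ => zint t n, hdmean t]
    calc (∑ t ∈ Finset.range T, ∑ n, ∫ ω, z t n ω ∂P) - T * c
        = ∑ t ∈ Finset.range T, ((∑ n, ∫ ω, z t n ω ∂P) - c) := by
          rw [Finset.sum_sub_distrib, Finset.sum_const, Finset.card_range]
          ring
      _ = ∑ t ∈ Finset.range T, ∫ ω, ((∑ n, z t n ω) - d t ω) ∂P := by
          exact Finset.sum_congr rfl fun t _ => (hterm' t).symm
      _ ≤ ∫ ω, Q T ω ∂P := hmono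
  set f : ℕ → ℝ := fun T => (1 / (T : ℝ)) * ∑ t ∈ Finset.range T, ∑ n, ∫ ω, z t n ω ∂P
    with hf
  set g : ℕ → ℝ := fun T => (∫ ω, Q T ω ∂P) / (T : ℝ) + c with hg
  have hgtendsto : Tendsto g atTop (nhds c) := by
    simpa using hQlim.add (tendsto_const_nhds (x := c))
  have hzmean : ∀ t n, -zmax ≤ ∫ ω, z t n ω ∂P := by
    intro t n
    have h1 : ‖∫ ω, z t n ω ∂P‖ ≤ zmax * (P Set.univ).toReal :=
      norm_integral_le_of_norm_le_const (Filter.Eventually.of_forall fun ω => by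
        simpa [Real.norm_eq_abs] using hzbdd t n ω)
    rw [measure_univ] at h1
    simp only [ENNReal.toReal_one, mul_one, Real.norm_eq_abs] at h1
    exact neg_le_of_abs_le h1
  have hev : ∀ᶠ T in atTop, f T ≤ g T := by
    filter_upwards [eventually_ge_atTop 1] with T hT
    have hTpos : (0 : ℝ) < T := by exact_mod_cast hT
    have h2 : (∑ t ∈ Finset.range T, ∑ n, ∫ ω, z t n ω ∂P)
        ≤ (∫ ω, Q T ω ∂P) + T * c := by linarith [hEbound T]
    have h3 : g T = ((∫ ω, Q T ω ∂P) + T * c) / T := by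
      simp only [hg]; rw [add_div, mul_div_cancel_left₀ c hTpos.ne']
    have h4 : f T = (∑ t ∈ Finset.range T, ∑ n, ∫ ω, z t n ω ∂P) / (T : ℝ) := by
      simp only [hf]; ring
    rw [h3, h4]
    gcongr
  have hfbdd : IsBoundedUnder (· ≥ ·) atTop f := by
    refine ⟨-(N * zmax), ?_⟩
    rw [eventually_map]
    filter_upwards [eventually_ge_atTop 1] with T hT
    have hTpos : (0 : ℝ) < T := by exact_mod_cast hT
    have hS : -((T : ℝ) * (N * zmax)) ≤ ∑ t ∈ Finset.range T, ∑ n, ∫ ω, z t n ω ∂P := by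
      calc -((T : ℝ) * (N * zmax)) = ∑ t ∈ Finset.range T, ∑ _n : Fin N, (-zmax) := by
            simp [Finset.sum_const, Finset.card_range]
        _ ≤ _ := Finset.sum_le_sum fun t _ => Finset.sum_le_sum fun n _ => hzmean t n
    have := mul_le_mul_of_nonneg_left hS (le_of_lt (one_div_pos.mpr hTpos))
    calc -((N : ℝ) * zmax) = (1 / (T : ℝ)) * (-((T : ℝ) * (N * zmax))) := by
          field_simp
      _ ≤ f T := this
  calc limsup f atTop ≤ limsup g atTop :=
        limsup_le_limsup hev hfbdd.isCoboundedUnder_le hgtendsto.isBoundedUnder_le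
    _ = c := hgtendsto.limsup_eq
end

section
/- Let L ≥ 0 and let A ⊆ ℝ^{L+1} × ℝ be a nonempty set of pairs (v, T) such that T ≥ 1 for every (v, T) ∈ A. Define 𝒫 = { v/T : (v, T) ∈ convexHull(A) } and 𝒬 = { v/T : (v, T) ∈ A }. Then 𝒫 = convexHull(𝒬); in particular 𝒫 is a convex subset of ℝ^{L+1}, and if 𝒬 is compact then 𝒫 is compact. -/
open Set Finset

/-- Carathéodory-based compactness: in a finite-dimensional space, the convex hull of a
nonempty compact set is compact. -/
lemma aux_isCompact_convexHull {m : ℕ} {s : Set (Fin m → ℝ)} (hne : s.Nonempty)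
    (hs : IsCompact s) : IsCompact (convexHull ℝ s) := by
  classical
  obtain ⟨a0, ha0⟩ := hne
  set n := m + 1 with hn
  set g : (Fin n → ℝ) × (Fin n → (Fin m → ℝ)) → (Fin m → ℝ) :=
    fun wx => ∑ i, wx.1 i • wx.2 i with hg
  set K : Set ((Fin n → ℝ) × (Fin n → (Fin m → ℝ))) :=
    (stdSimplex ℝ (Fin n)) ×ˢ (Set.univ.pi fun _ => s) with hK
  have himg : convexHull ℝ s = g '' K := by
    apply Set.Subset.antisymm
    · intro x hx
      obtain ⟨ι, hfin, z, w, hrange, hindep, hwpos, hwsum, hxeq⟩ :=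
        eq_pos_convex_span_of_mem_convexHull hx
      -- card ι ≤ n
      have hcard : Fintype.card ι ≤ n := by
        rcases isEmpty_or_nonempty ι with hι | hι
        · rw [Fintype.card_eq_zero]; omega
        · have h1 := hindep.finrank_vectorSpan_add_one
          have h2 : Module.finrank ℝ (vectorSpan ℝ (Set.range z)) ≤
              Module.finrank ℝ (Fin m → ℝ) := Submodule.finrank_le _
          have h3 : Module.finrank ℝ (Fin m → ℝ) = m := by
            simp [Module.finrank_fintype_fun_eq_card]
          omega
      obtain ⟨e⟩ : Nonempty (ι ↪ Fin n) :=
        Function.Embedding.nonempty_of_card_le (by simpa using hcard)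
      set w' : Fin n → ℝ := Function.extend e w 0 with hw'
      set z' : Fin n → (Fin m → ℝ) := Function.extend e z (fun _ => a0) with hz'
      have hwe : ∀ i, w' (e i) = w i := fun i => e.injective.extend_apply w 0 i
      have hze : ∀ i, z' (e i) = z i := fun i => e.injective.extend_apply z _ i
      have hw'0 : ∀ j, j ∉ Finset.univ.map e → w' j = 0 := by
        intro j hj
        rw [hw', Function.extend_def]
        split
        · exfalso; apply hj
          obtain ⟨i, rfl⟩ := ‹∃ i, e i = j›
          exact Finset.mem_map_of_mem e (Finset.mem_univ i)
        · rfl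
      have hsum' : ∑ j, w' j = 1 := by
        rw [← Finset.sum_subset (Finset.subset_univ (Finset.univ.map e))
          (fun j _ hj => hw'0 j hj)]
        rw [Finset.sum_map]
        simpa [hwe] using hwsum
      refine ⟨(w', z'), ⟨?_, ?_⟩, ?_⟩
      · constructor
        · intro j
          show 0 ≤ w' j
          rw [hw', Function.extend_def]
          split
          · exact (hwpos _).le
          · exact le_refl 0
        · exact hsum'
      · intro j _
        show z' j ∈ s
        rw [hz', Function.extend_def]
        split
        · exact hrange (Set.mem_range_self _)
        · exact ha0
      · show ∑ j, w' j • z' j = x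
        rw [← Finset.sum_subset (Finset.subset_univ (Finset.univ.map e))
          (fun j _ hj => by rw [hw'0 j hj, zero_smul])]
        rw [Finset.sum_map]
        simpa [hwe, hze] using hxeq
    · rintro x ⟨⟨w, z⟩, ⟨⟨hw0, hw1⟩, hzs⟩, rfl⟩
      have : Finset.univ.centerMass w z ∈ convexHull ℝ s := by
        apply Finset.centerMass_mem_convexHull
        · exact fun i _ => hw0 i
        · rw [hw1]; exact one_pos
        · exact fun i _ => hzs i (Set.mem_univ i)
      rwa [Finset.centerMass, hw1, inv_one, one_smul] at this
  rw [himg]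
  have hKc : IsCompact K := (isCompact_stdSimplex ..).prod (isCompact_univ_pi fun _ => hs)
  refine hKc.image ?_
  apply continuous_finset_sum
  intro i _
  exact ((continuous_apply i).comp continuous_fst).smul
    ((continuous_apply i).comp continuous_snd)

/-- The performance region `P = { v/T : (v,T) ∈ convexHull A }` of a renewal system equals
the convex hull of `Q = { v/T : (v,T) ∈ A }`; in particular it is convex, and compact
whenever `Q` is compact. -/
theorem stmt1 (L : ℕ)
    (A : Set ((Fin (L + 1) → ℝ) × ℝ)) (hA : A.Nonempty)
    (hT : ∀ p ∈ A, 1 ≤ p.2)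
    (P Q : Set (Fin (L + 1) → ℝ))
    (hP : P = (fun p : (Fin (L + 1) → ℝ) × ℝ => p.2⁻¹ • p.1) '' (convexHull ℝ A))
    (hQ : Q = (fun p : (Fin (L + 1) → ℝ) × ℝ => p.2⁻¹ • p.1) '' A) :
    P = convexHull ℝ Q ∧ Convex ℝ P ∧ (IsCompact Q → IsCompact P) := by
  subst hP hQ
  set f : (Fin (L + 1) → ℝ) × ℝ → (Fin (L + 1) → ℝ) := fun p => p.2⁻¹ • p.1 with hf
  -- every point of the hull has T ≥ 1
  have hT' : ∀ p ∈ convexHull ℝ A, 1 ≤ p.2 := by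
    intro p hp
    have hsub : convexHull ℝ A ⊆ {q : (Fin (L + 1) → ℝ) × ℝ | 1 ≤ q.2} :=
      convexHull_min hT (convex_halfSpace_ge (LinearMap.snd ℝ _ ℝ).isLinear 1)
    exact hsub hp
  -- P is convex
  have hPconv : Convex ℝ (f '' convexHull ℝ A) := by
    rintro x ⟨p, hp, rfl⟩ y ⟨q, hq, rfl⟩ a b ha hb hab
    have hp2 : (0:ℝ) < p.2 := lt_of_lt_of_le one_pos (hT' p hp)
    have hq2 : (0:ℝ) < q.2 := lt_of_lt_of_le one_pos (hT' q hq)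
    obtain ⟨D, hD⟩ : ∃ D : ℝ, D = a / p.2 + b / q.2 := ⟨_, rfl⟩
    have hDpos : 0 < D := by
      rcases lt_or_eq_of_le ha with ha' | ha'
      · have h1 : 0 < a / p.2 := div_pos ha' hp2
        have h2 : 0 ≤ b / q.2 := div_nonneg hb hq2.le
        rw [hD]; linarith
      · have hb1 : b = 1 := by linarith
        have h1 : 0 < b / q.2 := div_pos (by linarith) hq2
        have h2 : 0 ≤ a / p.2 := div_nonneg ha hp2.le
        rw [hD]; linarith
    obtain ⟨lam, hlam⟩ : ∃ l : ℝ, l = a / (p.2 * D) := ⟨_, rfl⟩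
    obtain ⟨mu, hmu⟩ : ∃ l : ℝ, l = b / (q.2 * D) := ⟨_, rfl⟩
    have hlam0 : 0 ≤ lam := hlam ▸ div_nonneg ha (by positivity)
    have hmu0 : 0 ≤ mu := hmu ▸ div_nonneg hb (by positivity)
    have hlm : lam + mu = 1 := by
      have h1 : lam + mu = (a / p.2 + b / q.2) / D := by
        rw [hlam, hmu]
        field_simp
      rw [h1, ← hD, div_self hDpos.ne']
    have hmem : lam • p + mu • q ∈ convexHull ℝ A :=
      (convex_convexHull ℝ A) hp hq hlam0 hmu0 hlm
    refine ⟨lam • p + mu • q, hmem, ?_⟩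
    have hlp : lam * p.2 = a / D := by
      rw [hlam]; field_simp [hDpos.ne']
    have hmq : mu * q.2 = b / D := by
      rw [hmu]; field_simp [hDpos.ne']
    have h2 : (lam • p + mu • q).2 = D⁻¹ := by
      simp only [Prod.snd_add, Prod.smul_snd, smul_eq_mul]
      rw [hlp, hmq, ← add_div, hab, one_div]
    show (lam • p + mu • q).2⁻¹ • (lam • p + mu • q).1 = a • f p + b • f q
    rw [h2, inv_inv]
    simp only [Prod.fst_add, Prod.smul_fst, hf, smul_add, smul_smul]
    congr 1
    · congr 1
      rw [hlam]
      field_simp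
    · congr 1
      rw [hmu]
      field_simp
  -- P ⊆ convexHull Q
  have hsub : f '' convexHull ℝ A ⊆ convexHull ℝ (f '' A) := by
    rintro x ⟨p, hp, rfl⟩
    have hp2 : (0:ℝ) < p.2 := lt_of_lt_of_le one_pos (hT' p hp)
    rw [_root_.convexHull_eq] at hp
    obtain ⟨ι, t, w, z, hw0, hw1, hz, hcm⟩ := hp
    have hz2 : ∀ i ∈ t, (0:ℝ) < (z i).2 := fun i hi =>
      lt_of_lt_of_le one_pos (hT (z i) (hz i hi))
    have hpeq : p = ∑ i ∈ t, w i • z i := by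
      rw [← hcm, Finset.centerMass, hw1, inv_one, one_smul]
    have hsum2 : p.2 = ∑ i ∈ t, w i * (z i).2 := by
      rw [hpeq, Prod.snd_sum]
      simp [Prod.smul_snd]
    have hsum1 : p.1 = ∑ i ∈ t, w i • (z i).1 := by
      rw [hpeq, Prod.fst_sum]
      simp [Prod.smul_fst]
    have hkey : t.centerMass (fun i => w i * (z i).2) (fun i => f (z i)) = f p := by
      rw [Finset.centerMass, ← hsum2]
      show p.2⁻¹ • ∑ i ∈ t, (w i * (z i).2) • ((z i).2⁻¹ • (z i).1) = p.2⁻¹ • p.1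
      congr 1
      rw [hsum1]
      refine Finset.sum_congr rfl fun i hi => ?_
      rw [smul_smul]
      congr 1
      rw [mul_assoc, mul_inv_cancel₀ (hz2 i hi).ne', mul_one]
    rw [← hkey]
    refine Finset.centerMass_mem_convexHull t
      (fun i hi => mul_nonneg (hw0 i hi) (hz2 i hi).le) ?_
      (fun i hi => ⟨z i, hz i hi, rfl⟩)
    rw [← hsum2]; exact hp2
  -- Q ⊆ P
  have hQP : f '' A ⊆ f '' convexHull ℝ A := Set.image_mono (subset_convexHull ℝ A)
  have hPQ : f '' convexHull ℝ A = convexHull ℝ (f '' A) :=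
    le_antisymm hsub (convexHull_min hQP hPconv)
  refine ⟨hPQ, hPconv, fun hQc => ?_⟩
  rw [hPQ]
  exact aux_isCompact_convexHull (hA.image f) hQc
end

section
/- Let V, c_max, R_max ≥ 0 and let Q, R, S, c : ℕ → ℝ satisfy for every t ∈ ℕ: Q(0) = 0; Q(t+1) = max{Q(t) + R(t) − S(t), 0}; 0 ≤ R(t) ≤ R_max; S(t) ≥ 0; c(t) ≤ c_max; and R(t) = 0 whenever Q(t) > V·c(t). Then Q(t) ≤ V·c_max + R_max for all t ∈ ℕ. -/
/-- Under the threshold-based admission rule (route only when `Q t ≤ V * c t`), the request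
queue is deterministically bounded by `V * cmax + Rmax`. -/
theorem stmt3 (V cmax Rmax : ℝ) (hV : 0 ≤ V) (hcmax : 0 ≤ cmax) (hRmax : 0 ≤ Rmax)
    (Q R S c : ℕ → ℝ)
    (hQ0 : Q 0 = 0)
    (hQrec : ∀ t, Q (t + 1) = max (Q t + R t - S t) 0)
    (hR : ∀ t, 0 ≤ R t ∧ R t ≤ Rmax)
    (hS : ∀ t, 0 ≤ S t)
    (hc : ∀ t, c t ≤ cmax)
    (hthresh : ∀ t, Q t > V * c t → R t = 0) :
    ∀ t, Q t ≤ V * cmax + Rmax := by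
  intro t
  induction t with
  | zero => rw [hQ0]; positivity
  | succ t ih =>
    rw [hQrec t]
    apply max_le _ (by positivity)
    by_cases h : Q t ≤ V * c t
    · have : V * c t ≤ V * cmax := mul_le_mul_of_nonneg_left (hc t) hV
      have := (hR t).2
      have := hS t
      linarith
    · have hr0 := hthresh t (lt_of_not_ge h)
      have := hS t
      linarith [hr0, ih]
end

section
/- Let N ≥ 1 and consider real sequences Q, λ, r and, for each n ∈ {1,…,N}, sequences Q_n, R_n, S_n, satisfying for every t ∈ ℕ: Q(0) = 0 and Q_n(0) = 0 for all n; Q_n(t+1) = max{Q_n(t) + R_n(t) − S_n(t), 0}; Q(t+1) = max{Q(t) + λ(t) − r(t) − Σ_{n=1}^N S_n(t), 0}; and λ(t) − r(t) = Σ_{n=1}^N R_n(t). Then Q(t) ≤ Σ_{n=1}^N Q_n(t) for all t ∈ ℕ. In particular, if in addition Q_n(t) ≤ V·c_max + R_max for all n and t, then Q(t) ≤ N·(V·c_max + R_max) for all t. -/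
/-- In the virtualization technique, the single actual queue `Q` is dominated by the sum of
the `N` virtual queues `Qn`; in particular, if each virtual queue is bounded by
`V * cmax + Rmax`, then `Q t ≤ N * (V * cmax + Rmax)`. -/
theorem stmt6 (N : ℕ) (hN : 1 ≤ N)
    (Q lam r : ℕ → ℝ) (Qn Rn Sn : Fin N → ℕ → ℝ)
    (hQ0 : Q 0 = 0) (hQn0 : ∀ n, Qn n 0 = 0)
    (hQnrec : ∀ n t, Qn n (t + 1) = max (Qn n t + Rn n t - Sn n t) 0)
    (hQrec : ∀ t, Q (t + 1) = max (Q t + lam t - r t - ∑ n, Sn n t) 0)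
    (hbal : ∀ t, lam t - r t = ∑ n, Rn n t) :
    (∀ t, Q t ≤ ∑ n, Qn n t) ∧
    (∀ V cmax Rmax : ℝ, (∀ n t, Qn n t ≤ V * cmax + Rmax) →
      ∀ t, Q t ≤ N * (V * cmax + Rmax)) := by
  have main : ∀ t, Q t ≤ ∑ n, Qn n t := by
    intro t
    induction t with
    | zero => simp [hQ0, hQn0]
    | succ t ih =>
      rw [hQrec]
      have h1 : Q t + lam t - r t - ∑ n, Sn n t ≤ ∑ n, (Qn n t + Rn n t - Sn n t) := by
        have := hbal t
        rw [Finset.sum_sub_distrib, Finset.sum_add_distrib]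
        linarith
      calc max (Q t + lam t - r t - ∑ n, Sn n t) 0
          ≤ ∑ n, max (Qn n t + Rn n t - Sn n t) 0 := by
            apply max_le
            · exact h1.trans (Finset.sum_le_sum fun n _ => le_max_left _ _)
            · exact Finset.sum_nonneg fun n _ => le_max_right _ _
        _ = ∑ n, Qn n (t + 1) := by simp [hQnrec]
  refine ⟨main, fun V cmax Rmax hb t => ?_⟩
  calc Q t ≤ ∑ n, Qn n t := main t
    _ ≤ ∑ _n : Fin N, (V * cmax + Rmax) := Finset.sum_le_sum fun n _ => hb n t
    _ = N * (V * cmax + Rmax) := by simp; ring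
end

section
/- Let β ≥ 0, C ≥ 0 and p_max ≥ 0. Let t : ℕ → ℕ be strictly increasing with t(0) = 0, let p : ℕ → ℝ satisfy 0 ≤ p(k) ≤ p_max for all k, and let Q : ℕ → ℝ satisfy Q(0) = 0, Q(k+1) ≥ Q(k) + p(k) − β·(t(k+1) − t(k)), and Q(k) ≤ C for all k ∈ ℕ. Define the per-slot power P : ℕ → ℝ by P(s) = p(k) if s = t(k) for some k, and P(s) = 0 otherwise. Then limsup_{T→∞} (1/T) Σ_{s=0}^{T−1} P(s) ≤ β. -/
open Filter

/-- If the virtual queue `Q` for the average-power constraint with budget `β` is bounded by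
`C`, then the per-slot power process `P` (which expends `p k` at the first slot `t k` of
frame `k` and `0` elsewhere) has time-average at most `β`. -/
theorem stmt7 (β C pmax : ℝ) (hβ : 0 ≤ β) (hC : 0 ≤ C) (hpmax : 0 ≤ pmax)
    (t : ℕ → ℕ) (ht : StrictMono t) (ht0 : t 0 = 0)
    (p : ℕ → ℝ) (hp : ∀ k, 0 ≤ p k ∧ p k ≤ pmax)
    (Q : ℕ → ℝ) (hQ0 : Q 0 = 0)
    (hQrec : ∀ k, Q k + p k - β * ((t (k + 1) : ℝ) - (t k : ℝ)) ≤ Q (k + 1))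
    (hQbdd : ∀ k, Q k ≤ C)
    (P : ℕ → ℝ)
    (hPt : ∀ k, P (t k) = p k)
    (hP0 : ∀ s, (∀ k, t k ≠ s) → P s = 0) :
    limsup (fun T : ℕ => (1 / (T : ℝ)) * ∑ s ∈ Finset.range T, P s) atTop ≤ β := by
  have hPnn : ∀ s, 0 ≤ P s := by
    intro s
    by_cases h : ∃ k, t k = s
    · obtain ⟨k, rfl⟩ := h; rw [hPt]; exact (hp k).1
    · rw [hP0 s (fun k hk => h ⟨k, hk⟩)]
  -- telescoping bound
  have htel : ∀ k, ∑ j ∈ Finset.range k, p j ≤ Q k + β * (t k : ℝ) := by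
    intro k
    induction k with
    | zero => simp [hQ0, ht0]
    | succ k ih =>
      rw [Finset.sum_range_succ]
      have h1 := hQrec k
      linarith
  -- sum of P over range T equals sum of p over frames starting before T
  have hsum : ∀ T : ℕ, ∑ s ∈ Finset.range T, P s =
      ∑ k ∈ (Finset.range T).filter (fun k => t k < T), p k := by
    intro T
    have himg : ((Finset.range T).filter (fun k => t k < T)).image t ⊆ Finset.range T := by
      intro s hs
      simp only [Finset.mem_image, Finset.mem_filter, Finset.mem_range] at hs ⊢
      obtain ⟨k, ⟨_, hk⟩, rfl⟩ := hs
      exact hk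
    calc ∑ s ∈ Finset.range T, P s
        = ∑ s ∈ ((Finset.range T).filter (fun k => t k < T)).image t, P s := by
          refine (Finset.sum_subset himg ?_).symm
          intro s hs hns
          refine hP0 s (fun k hk => hns ?_)
          subst hk
          simp only [Finset.mem_range] at hs
          refine Finset.mem_image_of_mem t ?_
          simp only [Finset.mem_filter, Finset.mem_range]
          exact ⟨lt_of_le_of_lt ht.le_apply hs, hs⟩
      _ = ∑ k ∈ (Finset.range T).filter (fun k => t k < T), P (t k) :=
          Finset.sum_image (fun a _ b _ hab => ht.injective hab)
      _ = ∑ k ∈ (Finset.range T).filter (fun k => t k < T), p k :=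
          Finset.sum_congr rfl (fun k _ => hPt k)
  -- bound on partial sums
  have hbound : ∀ T : ℕ, ∑ s ∈ Finset.range T, P s ≤ C + pmax + β * T := by
    intro T
    rw [hsum T]
    set S := (Finset.range T).filter (fun k => t k < T) with hS
    rcases S.eq_empty_or_nonempty with h | h
    · rw [h, Finset.sum_empty]
      positivity
    · set m := S.max' h with hm
      have hmS : m ∈ S := S.max'_mem h
      have hmlt : t m < T := (Finset.mem_filter.mp hmS).2
      have hsub : S ⊆ Finset.range (m + 1) := by
        intro k hk
        simp only [Finset.mem_range, Nat.lt_succ_iff]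
        exact S.le_max' k hk
      have h1 : ∑ k ∈ S, p k ≤ ∑ k ∈ Finset.range (m + 1), p k :=
        Finset.sum_le_sum_of_subset_of_nonneg hsub (fun k _ _ => (hp k).1)
      have h2 : ∑ k ∈ Finset.range (m + 1), p k ≤ Q m + β * (t m : ℝ) + pmax := by
        rw [Finset.sum_range_succ]
        linarith [htel m, (hp m).2]
      have h3 : β * (t m : ℝ) ≤ β * T := by
        apply mul_le_mul_of_nonneg_left _ hβ
        exact_mod_cast hmlt.le
      calc ∑ k ∈ S, p k ≤ Q m + β * (t m : ℝ) + pmax := h1.trans h2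
        _ ≤ C + pmax + β * T := by linarith [hQbdd m]
  -- conclude via limsup comparison
  have hlim : Tendsto (fun T : ℕ => β + (C + pmax) / (T : ℝ)) atTop (nhds β) := by
    have : Tendsto (fun T : ℕ => (C + pmax) / (T : ℝ)) atTop (nhds 0) :=
      Tendsto.div_atTop tendsto_const_nhds tendsto_natCast_atTop_atTop
    simpa using tendsto_const_nhds.add this
  have hev : ∀ᶠ T : ℕ in atTop, (1 / (T : ℝ)) * ∑ s ∈ Finset.range T, P s
      ≤ β + (C + pmax) / (T : ℝ) := by
    filter_upwards [eventually_gt_atTop 0] with T hT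
    have hT' : (0 : ℝ) < T := by exact_mod_cast hT
    rw [one_div, inv_mul_le_iff₀ hT']
    have := hbound T
    have hc : (T : ℝ) * ((C + pmax) / T) = C + pmax := by field_simp
    rw [mul_add, hc]
    linarith [hbound T]
  calc limsup (fun T : ℕ => (1 / (T : ℝ)) * ∑ s ∈ Finset.range T, P s) atTop
      ≤ limsup (fun T : ℕ => β + (C + pmax) / (T : ℝ)) atTop := by
        exact limsup_le_limsup hev
          (isCoboundedUnder_le_of_le atTop (fun T =>
            mul_nonneg (by positivity) (Finset.sum_nonneg fun s _ => hPnn s)))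
          hlim.isBoundedUnder_le
    _ = β := hlim.limsup_eq
end

section
/- Let 𝒜 be a set containing a distinguished idle element 0, and let p, φ : 𝒜 → ℝ satisfy p(0) = φ(0) = 0, 0 ≤ φ(α) ≤ 1 for all α ∈ 𝒜, and p(α) ∈ {0} ∪ [p_min, p_max] for all α, where 0 < p_min ≤ p_max. Let λ > 0, B̄ ≥ 0, V ≥ 0 and β > 0. Let (α_k)_{k∈ℕ} be a sequence in 𝒜 and (T_k)_{k∈ℕ} real numbers with T_k ≥ 1, and define Q(0) = 0 and Q(k+1) = max{Q(k) + p(α_k) − β·T_k, 0}. Suppose that for every k the action α_k maximizes the function α ↦ (V·B̄·φ(α) − Q(k)·p(α)) / (1 + φ(α)/λ) over 𝒜. Then Q(k) ≤ max{V·B̄/p_min + p_max − β, 0} for all k ∈ ℕ. -/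
/-- Deterministic bound on the virtual queue of the drift-plus-penalty ratio algorithm for
the single-user file-downloading problem: if each action `α k` maximizes the DPP ratio
`(V·B̄·φ(α) − Q(k)·p(α))/(1 + φ(α)/λ)`, then `Q k ≤ max{V·B̄/p_min + p_max − β, 0}`. -/
theorem stmt8 {A : Type*} (a0 : A)
    (p φ : A → ℝ) (pmin pmax : ℝ)
    (hp0 : p a0 = 0) (hφ0 : φ a0 = 0)
    (hφ : ∀ a, 0 ≤ φ a ∧ φ a ≤ 1)
    (hpmin : 0 < pmin) (hpminmax : pmin ≤ pmax)
    (hp : ∀ a, p a = 0 ∨ (pmin ≤ p a ∧ p a ≤ pmax))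
    (lam Bbar V β : ℝ) (hlam : 0 < lam) (hB : 0 ≤ Bbar) (hV : 0 ≤ V) (hβ : 0 < β)
    (α : ℕ → A) (T : ℕ → ℝ) (hT : ∀ k, 1 ≤ T k)
    (Q : ℕ → ℝ) (hQ0 : Q 0 = 0)
    (hQrec : ∀ k, Q (k + 1) = max (Q k + p (α k) - β * T k) 0)
    (hopt : ∀ k a, (V * Bbar * φ a - Q k * p a) / (1 + φ a / lam) ≤
        (V * Bbar * φ (α k) - Q k * p (α k)) / (1 + φ (α k) / lam)) :
    ∀ k, Q k ≤ max (V * Bbar / pmin + pmax - β) 0 := by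
  have key : ∀ k, 0 ≤ Q k ∧ Q k ≤ max (V * Bbar / pmin + pmax - β) 0 := by
    intro k
    induction k with
    | zero => simp [hQ0]
    | succ k ih =>
      obtain ⟨hQnn, hQle⟩ := ih
      refine ⟨by rw [hQrec k]; exact le_max_right _ _, ?_⟩
      rw [hQrec k]
      have hβT : β ≤ β * T k := by
        nlinarith [hT k]
      rcases hp (α k) with hpz | ⟨hpl, hpu⟩
      · -- idle-like action: queue can't increase
        refine max_le ?_ (le_max_right _ _)
        calc Q k + p (α k) - β * T k = Q k - β * T k := by rw [hpz]; ring
          _ ≤ Q k := by linarith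
          _ ≤ _ := hQle
      · -- active action: Q k ≤ V*Bbar/pmin
        have hd : (0:ℝ) < 1 + φ (α k) / lam := by
          have := (hφ (α k)).1
          positivity
        have h0 : (0:ℝ) ≤ (V * Bbar * φ (α k) - Q k * p (α k)) / (1 + φ (α k) / lam) := by
          have := hopt k a0
          simpa [hp0, hφ0] using this
        have hnum : 0 ≤ V * Bbar * φ (α k) - Q k * p (α k) := by
          have := (div_nonneg_iff.mp h0)
          rcases this with ⟨h, _⟩ | ⟨_, h⟩
          · exact h
          · linarith
        have hQVB : Q k * pmin ≤ V * Bbar := by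
          have h1 : Q k * p (α k) ≤ V * Bbar * φ (α k) := by linarith
          have h2 : V * Bbar * φ (α k) ≤ V * Bbar := by
            nlinarith [(hφ (α k)).2, mul_nonneg hV hB]
          nlinarith
        have hQb : Q k ≤ V * Bbar / pmin := (le_div_iff₀ hpmin).mpr hQVB
        refine max_le ?_ (le_max_right _ _)
        refine le_trans ?_ (le_max_left _ _)
        linarith
  exact fun k => (key k).2
end

section
/- Let S be a finite nonempty set and let P_1, …, P_N be row-stochastic S×S matrices such that for every i ∈ {1,…,N} there exists τ_i ∈ ℕ with (P_i)^t entrywise strictly positive for all t ≥ τ_i. Then there exists a constant r₁ > 0, depending only on P_1, …, P_N, such that for every matrix P in the convex hull of {P_1, …, P_N}, every probability row vector d with d·P = d, and every probability row vector d_0: ‖d_0·P^t − d‖₁ ≤ 2·e^{(r₁ − t)/r₁} for all t ∈ ℕ. -/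
set_option linter.unusedSectionVars false
set_option maxHeartbeats 1000000
open Finset Matrix

section Aux
variable {S : Type*} [Fintype S] [DecidableEq S]

private lemma vecMul_apply' (x : S → ℝ) (Q : Matrix S S ℝ) (s' : S) :
    Matrix.vecMul x Q s' = ∑ s, x s * Q s s' := by
  simp [Matrix.vecMul, dotProduct]

private lemma sum_vecMul' (x : S → ℝ) (Q : Matrix S S ℝ) (hQ : ∀ s, ∑ s', Q s s' = 1) :
    ∑ s', Matrix.vecMul x Q s' = ∑ s, x s := by
  simp only [vecMul_apply']
  rw [Finset.sum_comm]
  simp [← Finset.mul_sum, hQ]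

private lemma pow_nonneg' (Q : Matrix S S ℝ) (hQ : ∀ s s', 0 ≤ Q s s') (k : ℕ) :
    ∀ s s', 0 ≤ (Q ^ k) s s' := by
  induction k with
  | zero => intro s s'; simp [Matrix.one_apply]; positivity
  | succ k ih =>
    intro s s'
    rw [pow_succ, Matrix.mul_apply]
    exact Finset.sum_nonneg fun u _ => mul_nonneg (ih s u) (hQ u s')

private lemma pow_rowsum' (Q : Matrix S S ℝ) (hQ : ∀ s, ∑ s', Q s s' = 1) (k : ℕ) :
    ∀ s, ∑ s', (Q ^ k) s s' = 1 := by
  induction k with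
  | zero => intro s; simp [Matrix.one_apply]
  | succ k ih =>
    intro s
    simp only [pow_succ, Matrix.mul_apply]
    rw [Finset.sum_comm]
    simp [← Finset.mul_sum, hQ, ih s]

private lemma contract' (Q : Matrix S S ℝ) (α : ℝ)
    (hα : ∀ s s', α ≤ Q s s') (hQ : ∀ s, ∑ s', Q s s' = 1)
    (x : S → ℝ) (hx : ∑ s, x s = 0) :
    ∑ s', |Matrix.vecMul x Q s'| ≤ (1 - Fintype.card S * α) * ∑ s, |x s| := by
  have key : ∀ s', |Matrix.vecMul x Q s'| ≤ ∑ s, |x s| * (Q s s' - α) := by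
    intro s'
    have h1 : Matrix.vecMul x Q s' = ∑ s, x s * (Q s s' - α) := by
      simp only [mul_sub, Finset.sum_sub_distrib, ← Finset.sum_mul, hx, zero_mul, sub_zero,
        vecMul_apply']
    rw [h1]
    refine (Finset.abs_sum_le_sum_abs _ _).trans (Finset.sum_le_sum ?_)
    intro s _
    rw [abs_mul, abs_of_nonneg (show (0:ℝ) ≤ Q s s' - α by linarith [hα s s'])]
  calc ∑ s', |Matrix.vecMul x Q s'| ≤ ∑ s', ∑ s, |x s| * (Q s s' - α) :=
        Finset.sum_le_sum fun s' _ => key s'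
    _ = (1 - Fintype.card S * α) * ∑ s, |x s| := by
        rw [Finset.sum_comm, Finset.mul_sum]
        refine Finset.sum_congr rfl fun s _ => ?_
        rw [← Finset.mul_sum, Finset.sum_sub_distrib, hQ s, Finset.sum_const,
          Finset.card_univ, nsmul_eq_mul]
        ring

private lemma pow_entry_lb' (P Q : Matrix S S ℝ) (μ : ℝ) (hμ : 0 ≤ μ)
    (hQ : ∀ s s', 0 ≤ Q s s')
    (hPnn : ∀ k s s', 0 ≤ (P ^ k) s s')
    (h : ∀ s s', μ * Q s s' ≤ P s s') (k : ℕ) :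
    ∀ s s', μ ^ k * (Q ^ k) s s' ≤ (P ^ k) s s' := by
  induction k with
  | zero => intro s s'; simp
  | succ k ih =>
    intro s s'
    simp only [pow_succ, Matrix.mul_apply]
    rw [Finset.mul_sum]
    refine Finset.sum_le_sum fun u _ => ?_
    have e : μ ^ k * μ * ((Q ^ k) s u * Q u s') = (μ ^ k * (Q ^ k) s u) * (μ * Q u s') := by ring
    rw [e]
    exact mul_le_mul (ih s u) (h u s') (mul_nonneg hμ (hQ u s')) (hPnn k s u)

private lemma iterate_contract' (P : Matrix S S ℝ) (τ : ℕ) (α : ℝ)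
    (hc : 0 ≤ 1 - Fintype.card S * α)
    (hP0 : ∀ s s', 0 ≤ P s s') (hP1 : ∀ s, ∑ s', P s s' = 1)
    (hPτ : ∀ s s', α ≤ (P ^ τ) s s')
    (x : S → ℝ) (hx : ∑ s, x s = 0) (t : ℕ) :
    ∑ s', |Matrix.vecMul x (P ^ t) s'| ≤
      (1 - Fintype.card S * α) ^ (t / τ) * ∑ s, |x s| := by
  set c := 1 - Fintype.card S * α with hcdef
  have hsum : ∀ k : ℕ, ∑ s', Matrix.vecMul x (P ^ k) s' = 0 := fun k => by
    rw [sum_vecMul' x _ (pow_rowsum' P hP1 k), hx]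
  have mult : ∀ q : ℕ, ∑ s', |Matrix.vecMul x (P ^ (τ * q)) s'| ≤ c ^ q * ∑ s, |x s| := by
    intro q
    induction q with
    | zero => simp [Matrix.vecMul_one]
    | succ q ih =>
      have e : P ^ (τ * (q + 1)) = P ^ (τ * q) * P ^ τ := by rw [Nat.mul_succ, pow_add]
      rw [e, ← Matrix.vecMul_vecMul]
      calc ∑ s', |Matrix.vecMul (Matrix.vecMul x (P ^ (τ * q))) (P ^ τ) s'|
          ≤ c * ∑ s', |Matrix.vecMul x (P ^ (τ * q)) s'| :=
            contract' _ α hPτ (pow_rowsum' P hP1 τ) _ (hsum _)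
        _ ≤ c * (c ^ q * ∑ s, |x s|) := mul_le_mul_of_nonneg_left ih hc
        _ = c ^ (q + 1) * ∑ s, |x s| := by ring
  have e : P ^ t = P ^ (τ * (t / τ)) * P ^ (t % τ) := by
    rw [← pow_add, Nat.div_add_mod]
  rw [e, ← Matrix.vecMul_vecMul]
  calc ∑ s', |Matrix.vecMul (Matrix.vecMul x (P ^ (τ * (t / τ)))) (P ^ (t % τ)) s'|
      ≤ (1 - Fintype.card S * 0) * ∑ s', |Matrix.vecMul x (P ^ (τ * (t / τ))) s'| :=
        contract' _ 0 (pow_nonneg' P hP0 _) (pow_rowsum' P hP1 _) _ (hsum _)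
    _ = ∑ s', |Matrix.vecMul x (P ^ (τ * (t / τ))) s'| := by ring_nf
    _ ≤ c ^ (t / τ) * ∑ s, |x s| := mult _

end Aux

/-- Uniform geometric mixing for all convex combinations of finitely many ergodic
row-stochastic matrices: there is `r₁ > 0` such that for any `P` in the convex hull of
`P_1, …, P_N`, any stationary distribution `d` of `P`, and any initial distribution `d₀`,
`‖d₀ Pᵗ − d‖₁ ≤ 2 e^{(r₁ − t)/r₁}` for all `t`. -/
theorem stmt9 {S : Type*} [Fintype S] [DecidableEq S] [Nonempty S]
    (N : ℕ) (hN : 1 ≤ N)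
    (Pm : Fin N → Matrix S S ℝ)
    (hnn : ∀ i s s', 0 ≤ Pm i s s')
    (hrow : ∀ i s, ∑ s', Pm i s s' = 1)
    (herg : ∀ i, ∃ τ : ℕ, ∀ t, τ ≤ t → ∀ s s', 0 < ((Pm i) ^ t) s s') :
    ∃ r₁ : ℝ, 0 < r₁ ∧
      ∀ P ∈ convexHull ℝ (Set.range Pm),
        ∀ d : S → ℝ, (∀ s, 0 ≤ d s) → (∑ s, d s) = 1 → Matrix.vecMul d P = d →
          ∀ d0 : S → ℝ, (∀ s, 0 ≤ d0 s) → (∑ s, d0 s) = 1 →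
            ∀ t : ℕ, (∑ s, |Matrix.vecMul d0 (P ^ t) s - d s|) ≤
              2 * Real.exp ((r₁ - t) / r₁) := by
  classical
  have hNE : Nonempty (Fin N) := ⟨⟨0, hN⟩⟩
  have hN0 : (0:ℝ) < N := by exact_mod_cast hN
  -- choose uniform positivity time τ
  choose τf hτf using herg
  set τ : ℕ := (Finset.univ.sup τf) + 1 with hτdef
  have hτpos : 0 < τ := Nat.succ_pos _
  have hpos : ∀ i s s', 0 < ((Pm i) ^ τ) s s' := fun i =>
    hτf i τ (Nat.le_succ_of_le (Finset.le_sup (Finset.mem_univ i)))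
  -- uniform entrywise lower bound ε on the (Pm i)^τ
  obtain ⟨p0, -, hmin⟩ := Finset.exists_min_image (Finset.univ : Finset (Fin N × S × S))
    (fun p => ((Pm p.1) ^ τ) p.2.1 p.2.2) ⟨Classical.arbitrary _, Finset.mem_univ _⟩
  set ε : ℝ := ((Pm p0.1) ^ τ) p0.2.1 p0.2.2 with hεdef
  have hεpos : 0 < ε := hpos _ _ _
  have hεle : ∀ i s s', ε ≤ ((Pm i) ^ τ) s s' := fun i s s' => hmin (i, s, s') (Finset.mem_univ _)
  set α : ℝ := ((N : ℝ)⁻¹) ^ τ * ε with hαdef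
  have hαpos : 0 < α := by positivity
  set c : ℝ := 1 - Fintype.card S * α with hcdef
  -- c ∈ [0,1)
  have hrowτ : ∀ i s, ∑ s', ((Pm i) ^ τ) s s' = 1 := fun i => pow_rowsum' _ (hrow i) τ
  have hαle : ∀ i s s', α ≤ ((Pm i) ^ τ) s s' := by
    intro i s s'
    refine le_trans ?_ (hεle i s s')
    have h1 : ((N:ℝ)⁻¹) ^ τ ≤ 1 :=
      pow_le_one₀ (by positivity) (inv_le_one_of_one_le₀ (by exact_mod_cast hN))
    nlinarith
  obtain ⟨sw⟩ := (inferInstance : Nonempty S)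
  have hc0 : 0 ≤ c := by
    have h1 : (Fintype.card S : ℝ) * α ≤ ∑ s', ((Pm p0.1) ^ τ) sw s' := by
      calc (Fintype.card S : ℝ) * α = ∑ _s' : S, α := by
            rw [Finset.sum_const, Finset.card_univ, nsmul_eq_mul]
        _ ≤ ∑ s', ((Pm p0.1) ^ τ) sw s' := Finset.sum_le_sum fun s' _ => hαle _ _ _
    rw [hrowτ p0.1 sw] at h1
    simp only [hcdef]; linarith
  have hc1 : c < 1 := by
    have : (0:ℝ) < Fintype.card S * α := by
      have := Fintype.card_pos (α := S)
      positivity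
    simp only [hcdef]; linarith
  -- the rate
  set γ : ℝ := max c (Real.exp (-1)) with hγdef
  have hγpos : 0 < γ := lt_of_lt_of_le (Real.exp_pos _) (le_max_right _ _)
  have hγlt1 : γ < 1 := max_lt hc1 (by
    have := Real.exp_lt_exp.mpr (show (-1:ℝ) < 0 by norm_num)
    simpa using this)
  set β : ℝ := -Real.log γ with hβdef
  have hβpos : 0 < β := by
    have := Real.log_neg hγpos hγlt1
    simp only [hβdef]; linarith
  have hβle1 : β ≤ 1 := by
    have h1 : (-1:ℝ) ≤ Real.log γ :=
      (Real.le_log_iff_exp_le hγpos).mpr (le_max_right _ _)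
    simp only [hβdef]; linarith
  refine ⟨(τ : ℝ) / β, by positivity, ?_⟩
  intro P hP d hd0 hd1 hdP d0 hd00 hd01 t
  set r₁ : ℝ := (τ : ℝ) / β with hr₁def
  have hr₁pos : 0 < r₁ := by positivity
  -- decompose P as a convex combination indexed by Fin N
  obtain ⟨ι, hι, w, z, hw0, hw1, hz, hzP⟩ := mem_convexHull_iff_exists_fintype.mp hP
  choose f hf using hz
  set μ : Fin N → ℝ := fun j => ∑ i ∈ Finset.univ.filter (fun i => f i = j), w i with hμdef
  have hμ0 : ∀ j, 0 ≤ μ j := fun j => Finset.sum_nonneg fun i _ => hw0 i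
  have hμ1 : ∑ j, μ j = 1 := by
    simp only [hμdef]
    rw [Finset.sum_fiberwise Finset.univ f w, hw1]
  have hPsum : P = ∑ j, μ j • Pm j := by
    rw [← hzP, ← Finset.sum_fiberwise Finset.univ f (fun i => w i • z i)]
    refine Finset.sum_congr rfl fun j _ => ?_
    rw [hμdef, Finset.sum_smul]
    refine Finset.sum_congr rfl fun i hi => ?_
    rw [Finset.mem_filter] at hi
    rw [← hf i, hi.2]
  have hPapp : ∀ s s', P s s' = ∑ j, μ j * Pm j s s' := by
    intro s s'
    rw [hPsum]
    simp [Matrix.sum_apply]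
  -- P is row-stochastic with nonneg entries
  have hP0 : ∀ s s', 0 ≤ P s s' := fun s s' => by
    rw [hPapp]
    exact Finset.sum_nonneg fun j _ => mul_nonneg (hμ0 j) (hnn j s s')
  have hP1 : ∀ s, ∑ s', P s s' = 1 := by
    intro s
    simp only [hPapp]
    rw [Finset.sum_comm]
    simp [← Finset.mul_sum, hrow, hμ1]
  -- some pure matrix has weight ≥ 1/N
  have hbig : ∃ j, (N:ℝ)⁻¹ ≤ μ j := by
    by_contra hcon
    push_neg at hcon
    have h1 : ∑ j, μ j < ∑ _j : Fin N, (N:ℝ)⁻¹ :=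
      Finset.sum_lt_sum_of_nonempty Finset.univ_nonempty fun j _ => hcon j
    rw [hμ1, Finset.sum_const, Finset.card_univ, Fintype.card_fin, nsmul_eq_mul] at h1
    rw [mul_inv_cancel₀ (ne_of_gt hN0)] at h1
    exact lt_irrefl _ h1
  obtain ⟨j₀, hj₀⟩ := hbig
  -- entrywise lower bound on P^τ
  have hPlb : ∀ s s', μ j₀ * Pm j₀ s s' ≤ P s s' := by
    intro s s'
    rw [hPapp]
    exact Finset.single_le_sum (f := fun j => μ j * Pm j s s')
      (fun j _ => mul_nonneg (hμ0 j) (hnn j s s')) (Finset.mem_univ j₀)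
  have hPτ : ∀ s s', α ≤ (P ^ τ) s s' := by
    intro s s'
    refine le_trans ?_ (pow_entry_lb' P (Pm j₀) (μ j₀) (hμ0 j₀) (hnn j₀)
      (pow_nonneg' P hP0) hPlb τ s s')
    rw [hαdef]
    exact mul_le_mul (pow_le_pow_left₀ (by positivity) hj₀ τ) (hεle j₀ s s') hεpos.le
      (pow_nonneg (hμ0 j₀) τ)
  -- stationarity at all powers
  have hstat : ∀ k : ℕ, Matrix.vecMul d (P ^ k) = d := by
    intro k
    induction k with
    | zero => simp [Matrix.vecMul_one]
    | succ k ih => rw [pow_succ, ← Matrix.vecMul_vecMul, ih, hdP]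
  -- the difference vector
  set x : S → ℝ := d0 - d with hxdef
  have hx : ∑ s, x s = 0 := by
    simp only [hxdef, Pi.sub_apply, Finset.sum_sub_distrib, hd01, hd1, sub_self]
  have hxnorm : ∑ s, |x s| ≤ 2 := by
    calc ∑ s, |x s| ≤ ∑ s, (d0 s + d s) := Finset.sum_le_sum fun s _ => by
          simp only [hxdef, Pi.sub_apply]
          calc |d0 s - d s| ≤ |d0 s| + |d s| := abs_sub _ _
            _ = d0 s + d s := by rw [abs_of_nonneg (hd00 s), abs_of_nonneg (hd0 s)]
      _ = 2 := by rw [Finset.sum_add_distrib, hd01, hd1]; norm_num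
  have hrewrite : ∀ s, Matrix.vecMul d0 (P ^ t) s - d s = Matrix.vecMul x (P ^ t) s := by
    intro s
    rw [hxdef, Matrix.sub_vecMul, hstat t]
    simp
  have hmain : ∑ s, |Matrix.vecMul d0 (P ^ t) s - d s| ≤ c ^ (t / τ) * 2 := by
    calc ∑ s, |Matrix.vecMul d0 (P ^ t) s - d s|
        = ∑ s, |Matrix.vecMul x (P ^ t) s| := by
          refine Finset.sum_congr rfl fun s _ => ?_; rw [hrewrite s]
      _ ≤ c ^ (t / τ) * ∑ s, |x s| := iterate_contract' P τ α hc0 hP0 hP1 hPτ x hx t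
      _ ≤ c ^ (t / τ) * 2 := mul_le_mul_of_nonneg_left hxnorm (pow_nonneg hc0 _)
  -- numeric estimate
  set q : ℕ := t / τ with hqdef
  have hcγ : c ^ q ≤ γ ^ q := pow_le_pow_left₀ hc0 (le_max_left _ _) q
  have hγexp : γ ^ q = Real.exp ((q : ℝ) * Real.log γ) := by
    rw [← Real.exp_log hγpos, ← Real.exp_nat_mul, Real.exp_log hγpos]
  have hqbound : (t : ℝ) < (τ : ℝ) * ((q : ℝ) + 1) := by
    have h1 : t < τ * (q + 1) := by
      rw [hqdef, Nat.mul_succ]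
      exact Nat.lt_mul_div_succ t hτpos |>.trans_le (le_of_eq rfl) |>.trans_le (le_refl _)
    exact_mod_cast h1
  have hexpo : (q : ℝ) * Real.log γ ≤ (r₁ - t) / r₁ := by
    have hlog : Real.log γ = -β := by rw [hβdef]; ring
    rw [hlog]
    have hr : (r₁ - t) / r₁ = 1 - (t : ℝ) * β / (τ : ℝ) := by
      rw [hr₁def]
      have hτne : (τ:ℝ) ≠ 0 := by positivity
      have hβne : β ≠ 0 := ne_of_gt hβpos
      field_simp
    rw [hr]
    have h3 : (t : ℝ) * β / (τ : ℝ) ≤ ((q : ℝ) + 1) * β := by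
      rw [div_le_iff₀ (by positivity : (0:ℝ) < (τ:ℝ))]
      nlinarith [hβpos.le, hqbound]
    nlinarith
  calc ∑ s, |Matrix.vecMul d0 (P ^ t) s - d s| ≤ c ^ q * 2 := hmain
    _ ≤ γ ^ q * 2 := by nlinarith
    _ = 2 * Real.exp ((q:ℝ) * Real.log γ) := by rw [hγexp]; ring
    _ ≤ 2 * Real.exp ((r₁ - t) / r₁) := by
        have := Real.exp_le_exp.mpr hexpo
        linarith
end

section
/- Let S be a finite nonempty set and let P_1, …, P_N be row-stochastic S×S matrices. Suppose there exists an integer r ≥ 1 such that for every sequence (i_1, …, i_r) ∈ {1,…,N}^r the product P_{i_1}·P_{i_2}⋯P_{i_r} has all entries strictly positive. Then there exists a constant τ ≥ 1 such that for every choice of matrices Q_1, …, Q_r from the convex hull of {P_1, …, P_N} and every pair of probability row vectors d_1, d_2: ‖(d_1 − d_2)·Q_1·Q_2⋯Q_r‖₁ ≤ e^{−1/τ}·‖d_1 − d_2‖₁. -/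
private lemma prod_mem_hull_pure {S : Type*} [Fintype S] [DecidableEq S]
    {N : ℕ} (Pm : Fin N → Matrix S S ℝ) :
    ∀ (n : ℕ) (Qs : Fin n → Matrix S S ℝ),
      (∀ j, Qs j ∈ convexHull ℝ (Set.range Pm)) →
      (List.ofFn Qs).prod ∈ convexHull ℝ
        {M | ∃ g : Fin n → Fin N, M = (List.ofFn fun j => Pm (g j)).prod} := by
  intro n
  induction n with
  | zero =>
    intro Qs _
    apply subset_convexHull
    exact ⟨Fin.elim0, by simp⟩
  | succ m ih =>
    intro Qs hQs
    have ht := ih (fun j => Qs j.succ) (fun j => hQs j.succ)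
    rw [List.ofFn_succ, List.prod_cons]
    have h1 : Qs 0 * (List.ofFn fun j => Qs j.succ).prod ∈
        (LinearMap.mulLeft ℝ (Qs 0)) '' (convexHull ℝ {M | ∃ g : Fin m → Fin N,
          M = (List.ofFn fun j => Pm (g j)).prod}) := ⟨_, ht, rfl⟩
    rw [LinearMap.image_convexHull] at h1
    refine convexHull_min ?_ (convex_convexHull _ _) h1
    rintro x ⟨p, ⟨g, rfl⟩, rfl⟩
    have h2 : Qs 0 * (List.ofFn fun j => Pm (g j)).prod ∈
        (LinearMap.mulRight ℝ ((List.ofFn fun j => Pm (g j)).prod)) ''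
          (convexHull ℝ (Set.range Pm)) := ⟨Qs 0, hQs 0, rfl⟩
    rw [LinearMap.image_convexHull] at h2
    refine convexHull_min ?_ (convex_convexHull _ _) h2
    rintro y ⟨p, ⟨i, rfl⟩, rfl⟩
    apply subset_convexHull
    refine ⟨Fin.cons i g, ?_⟩
    simp [LinearMap.mulRight_apply, List.ofFn_succ, Fin.cons_succ]

/-- Uniform `ℓ₁` contraction for length-`r` products of matrices from the convex hull of
finitely many row-stochastic matrices, under the unichain assumption that every length-`r`
product of the generating matrices is entrywise positive. -/
theorem stmt12 {S : Type*} [Fintype S] [DecidableEq S] [Nonempty S]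
    (N : ℕ) (hN : 1 ≤ N)
    (Pm : Fin N → Matrix S S ℝ)
    (hnn : ∀ i s s', 0 ≤ Pm i s s')
    (hrow : ∀ i s, ∑ s', Pm i s s' = 1)
    (r : ℕ) (hr : 1 ≤ r)
    (hpos : ∀ f : Fin r → Fin N, ∀ s s',
      0 < ((List.ofFn fun j => Pm (f j)).prod) s s') :
    ∃ τ : ℝ, 1 ≤ τ ∧
      ∀ Qs : Fin r → Matrix S S ℝ, (∀ j, Qs j ∈ convexHull ℝ (Set.range Pm)) →
        ∀ d₁ d₂ : S → ℝ, (∀ s, 0 ≤ d₁ s) → (∑ s, d₁ s) = 1 →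
          (∀ s, 0 ≤ d₂ s) → (∑ s, d₂ s) = 1 →
          (∑ s, |Matrix.vecMul (d₁ - d₂) ((List.ofFn fun j => Qs j).prod) s|) ≤
            Real.exp (-1 / τ) * ∑ s, |d₁ s - d₂ s| := by
  classical
  haveI : Nonempty (Fin N) := ⟨⟨0, hN⟩⟩
  set n : ℕ := Fintype.card S with hn
  have hn1 : 1 ≤ n := Fintype.card_pos
  -- minimal entry over all pure products
  have hne : (Finset.univ : Finset ((Fin r → Fin N) × S × S)).Nonempty := Finset.univ_nonempty
  set ε : ℝ := Finset.univ.inf' hne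
    (fun p : (Fin r → Fin N) × S × S =>
      ((List.ofFn fun j => Pm (p.1 j)).prod) p.2.1 p.2.2) with hε
  have hεpos : 0 < ε := by
    rw [hε, Finset.lt_inf'_iff]
    rintro ⟨f, s, s'⟩ _
    exact hpos f s s'
  have hεle : ∀ (f : Fin r → Fin N) s s',
      ε ≤ ((List.ofFn fun j => Pm (f j)).prod) s s' := by
    intro f s s'
    exact Finset.inf'_le _ (Finset.mem_univ (⟨f, s, s'⟩ : (Fin r → Fin N) × S × S))
  -- the set of matrices with entries ≥ ε is convex
  have hTconv : Convex ℝ {M : Matrix S S ℝ | ∀ s s', ε ≤ M s s'} := by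
    intro x hx y hy a b ha hb hab
    intro s s'
    have h1 := hx s s'
    have h2 := hy s s'
    simp only [Matrix.add_apply, Matrix.smul_apply, smul_eq_mul]
    nlinarith
  -- the set of row-stochastic matrices is convex and closed under mult
  have hStconv : Convex ℝ {M : Matrix S S ℝ |
      (∀ s s', 0 ≤ M s s') ∧ ∀ s, ∑ s', M s s' = 1} := by
    rintro x ⟨hx1, hx2⟩ y ⟨hy1, hy2⟩ a b ha hb hab
    constructor
    · intro s s'
      simp only [Matrix.add_apply, Matrix.smul_apply, smul_eq_mul]
      nlinarith [hx1 s s', hy1 s s']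
    · intro s
      simp only [Matrix.add_apply, Matrix.smul_apply, smul_eq_mul,
        Finset.sum_add_distrib, ← Finset.mul_sum, hx2 s, hy2 s]
      linarith
  have hhullSt : convexHull ℝ (Set.range Pm) ⊆ {M : Matrix S S ℝ |
      (∀ s s', 0 ≤ M s s') ∧ ∀ s, ∑ s', M s s' = 1} := by
    refine convexHull_min ?_ hStconv
    rintro x ⟨i, rfl⟩
    exact ⟨hnn i, hrow i⟩
  -- define the contraction factor
  set c : ℝ := max (1 - n * ε) (Real.exp (-1)) with hc
  have hcpos : 0 < c := lt_of_lt_of_le (Real.exp_pos (-1)) (le_max_right _ _)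
  have hclt1 : c < 1 := by
    apply max_lt
    · nlinarith [hεpos, (by exact_mod_cast hn1 : (1:ℝ) ≤ n)]
    · calc Real.exp (-1) < Real.exp 0 := Real.exp_lt_exp.mpr (by norm_num)
        _ = 1 := Real.exp_zero
  have hlogneg : Real.log c < 0 := Real.log_neg hcpos hclt1
  have hlogge : -1 ≤ Real.log c := by
    have := Real.log_le_log (Real.exp_pos (-1)) (le_max_right (1 - n * ε) (Real.exp (-1)))
    rwa [Real.log_exp] at this
  refine ⟨-1 / Real.log c, ?_, ?_⟩
  · rw [le_div_iff_of_neg hlogneg]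
    linarith
  · intro Qs hQs d₁ d₂ hd₁ hd₁s hd₂ hd₂s
    have hexp : Real.exp (-1 / (-1 / Real.log c)) = c := by
      have hL : Real.log c ≠ 0 := ne_of_lt hlogneg
      have : -1 / (-1 / Real.log c) = Real.log c := by field_simp
      rw [this, Real.exp_log hcpos]
    rw [hexp]
    set Q : Matrix S S ℝ := (List.ofFn fun j => Qs j).prod with hQ
    -- Q is in hull of pure products
    have hQmem := prod_mem_hull_pure Pm r Qs hQs
    have hQeps : ∀ s s', ε ≤ Q s s' := by
      have : Q ∈ {M : Matrix S S ℝ | ∀ s s', ε ≤ M s s'} := by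
        refine convexHull_min ?_ hTconv hQmem
        rintro x ⟨g, rfl⟩
        exact hεle g
      exact this
    -- Q is row-stochastic
    have hQrow : ∀ s, ∑ s', Q s s' = 1 := by
      have key : ∀ (l : List (Matrix S S ℝ)),
          (∀ M ∈ l, (∀ s s', 0 ≤ M s s') ∧ ∀ s, ∑ s', M s s' = 1) →
          (∀ s s', 0 ≤ l.prod s s') ∧ ∀ s, ∑ s', l.prod s s' = 1 := by
        intro l
        induction l with
        | nil =>
          intro _
          constructor
          · intro s s'
            simp [Matrix.one_apply]
            split <;> norm_num
          · intro s
            simp [Matrix.one_apply]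
        | cons A t iht =>
          intro hmem
          obtain ⟨hA1, hA2⟩ := hmem A List.mem_cons_self
          obtain ⟨ht1, ht2⟩ := iht (fun M hM => hmem M (List.mem_cons_of_mem _ hM))
          rw [List.prod_cons]
          constructor
          · intro s s'
            rw [Matrix.mul_apply]
            exact Finset.sum_nonneg fun k _ => mul_nonneg (hA1 s k) (ht1 k s')
          · intro s
            simp only [Matrix.mul_apply]
            rw [Finset.sum_comm]
            calc ∑ k, ∑ s', A s k * t.prod k s'
                = ∑ k, A s k * ∑ s', t.prod k s' := by
                  simp [Finset.mul_sum]
              _ = ∑ k, A s k := by simp [ht2]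
              _ = 1 := hA2 s
      exact (key _ (by
        intro M hM
        rw [List.mem_ofFn] at hM
        obtain ⟨j, rfl⟩ := hM
        exact hhullSt (hQs j))).2
    -- the contraction estimate
    set v : S → ℝ := fun s => d₁ s - d₂ s with hv
    have hvsum : ∑ k, v k = 0 := by
      simp [hv, Finset.sum_sub_distrib, hd₁s, hd₂s]
    have hvec : ∀ s, Matrix.vecMul (d₁ - d₂) Q s = ∑ k, v k * Q k s := by
      intro s
      simp [Matrix.vecMul, dotProduct, hv, Pi.sub_apply, sub_mul, Finset.sum_sub_distrib]
    have hnε : (n : ℝ) * ε ≤ 1 := by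
      obtain ⟨s₀⟩ := (inferInstance : Nonempty S)
      have := hQrow s₀
      calc (n : ℝ) * ε = ∑ _s' : S, ε := by
            simp [hn, mul_comm]
        _ ≤ ∑ s', Q s₀ s' := Finset.sum_le_sum fun s' _ => hQeps s₀ s'
        _ = 1 := hQrow s₀
    have key : (∑ s, |Matrix.vecMul (d₁ - d₂) Q s|) ≤ (1 - n * ε) * ∑ s, |v s| := by
      calc ∑ s, |Matrix.vecMul (d₁ - d₂) Q s|
          = ∑ s, |∑ k, v k * (Q k s - ε)| := by
            refine Finset.sum_congr rfl fun s _ => ?_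
            rw [hvec s]
            congr 1
            rw [Finset.sum_congr rfl (fun k _ => by ring :
              ∀ k ∈ Finset.univ, v k * (Q k s - ε) = v k * Q k s - v k * ε)]
            rw [Finset.sum_sub_distrib, ← Finset.sum_mul, hvsum]
            ring
        _ ≤ ∑ s, ∑ k, |v k| * (Q k s - ε) := by
            refine Finset.sum_le_sum fun s _ => ?_
            calc |∑ k, v k * (Q k s - ε)| ≤ ∑ k, |v k * (Q k s - ε)| :=
                  Finset.abs_sum_le_sum_abs _ _
              _ = ∑ k, |v k| * (Q k s - ε) := by
                  refine Finset.sum_congr rfl fun k _ => ?_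
                  rw [abs_mul, abs_of_nonneg (show (0:ℝ) ≤ Q k s - ε by linarith [hQeps k s])]
        _ = ∑ k, |v k| * (1 - n * ε) := by
            rw [Finset.sum_comm]
            refine Finset.sum_congr rfl fun k _ => ?_
            rw [← Finset.mul_sum, Finset.sum_sub_distrib, hQrow k]
            simp [hn, mul_comm]
        _ = (1 - n * ε) * ∑ s, |v s| := by
            rw [Finset.mul_sum]
            exact Finset.sum_congr rfl fun k _ => mul_comm _ _
    have hvnn : 0 ≤ ∑ s, |v s| := Finset.sum_nonneg fun s _ => abs_nonneg _
    calc (∑ s, |Matrix.vecMul (d₁ - d₂) Q s|)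
        ≤ (1 - n * ε) * ∑ s, |v s| := key
      _ ≤ c * ∑ s, |v s| := mul_le_mul_of_nonneg_right (le_max_left _ _) hvnn
      _ = c * ∑ s, |d₁ s - d₂ s| := by simp [hv]
end

section
/- Let K ≥ 1 and, for each k ∈ {1,…,K}, let S_k and A_k be finite nonempty sets and P_k : A_k × S_k × S_k → ℝ satisfy P_k(a, s, s') ≥ 0 and Σ_{s'∈S_k} P_k(a, s, s') = 1 for all a ∈ A_k and s ∈ S_k. Let Φ : (∏_{k} A_k) × (∏_{k} S_k) → ℝ be nonnegative and satisfy the product balance equation: for every joint state s' ∈ ∏_k S_k, Σ_{a} Φ(a, s') = Σ_{s} Σ_{a} Φ(a, s) · ∏_{k=1}^K P_k(a_k, s_k, s'_k), where the sums run over all joint actions a and joint states s. For each k define the marginal θ_k : A_k × S_k → ℝ by θ_k(b, u) = Σ_{(a,s) : a_k = b, s_k = u} Φ(a, s). Then for every k and every u' ∈ S_k: Σ_{b∈A_k} θ_k(b, u') = Σ_{u∈S_k} Σ_{b∈A_k} θ_k(b, u) · P_k(b, u, u'). -/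
/-- For `K` parallel MDPs with independent transitions, if a joint state–action probability
`Φ` satisfies the balance equation of the product MDP, then each marginal `θ_k` satisfies
the balance equation of the `k`-th MDP. -/
theorem stmt14 (K : ℕ) (hK : 1 ≤ K)
    (S A : Fin K → Type*)
    [∀ k, Fintype (S k)] [∀ k, Nonempty (S k)] [∀ k, DecidableEq (S k)]
    [∀ k, Fintype (A k)] [∀ k, Nonempty (A k)] [∀ k, DecidableEq (A k)]
    (P : ∀ k, A k → S k → S k → ℝ)
    (hPnn : ∀ k a s s', 0 ≤ P k a s s')
    (hProw : ∀ k a s, ∑ s', P k a s s' = 1)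
    (Φ : (∀ k, A k) → (∀ k, S k) → ℝ)
    (hΦnn : ∀ a s, 0 ≤ Φ a s)
    (hbal : ∀ s' : ∀ k, S k,
      (∑ a, Φ a s') = ∑ s, ∑ a, Φ a s * ∏ k, P k (a k) (s k) (s' k))
    (θ : ∀ k, A k → S k → ℝ)
    (hθ : ∀ k b u, θ k b u = ∑ a, ∑ s, if a k = b ∧ s k = u then Φ a s else 0) :
    ∀ k (u' : S k), (∑ b, θ k b u') = ∑ u, ∑ b, θ k b u * P k b u u' := by
  classical
  intro k u'
  -- Key: summing the product kernel over joint s' with coordinate k fixed gives P k.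
  have key : ∀ (a : ∀ k, A k) (s : ∀ k, S k),
      (∑ s' : ∀ k, S k, if s' k = u' then ∏ j, P j (a j) (s j) (s' j) else 0)
        = P k (a k) (s k) u' := by
    intro a s
    set f : ∀ j, S j → ℝ := fun j v =>
      if hj : j = k then (if hj ▸ v = u' then P j (a j) (s j) v else 0)
      else P j (a j) (s j) v with hf
    have h1 : ∀ s' : ∀ j, S j, (if s' k = u' then ∏ j, P j (a j) (s j) (s' j) else 0)
        = ∏ j, f j (s' j) := by
      intro s'
      by_cases h : s' k = u'
      · rw [if_pos h]
        refine Finset.prod_congr rfl fun j _ => ?_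
        by_cases hj : j = k
        · subst hj; simp [hf, h]
        · simp [hf, hj]
      · rw [if_neg h]
        refine (Finset.prod_eq_zero (Finset.mem_univ k) ?_).symm
        simp [hf, h]
    simp only [h1]
    have h2 : (∑ s' : ∀ j, S j, ∏ j, f j (s' j)) = ∏ j, ∑ v, f j v := by
      rw [Finset.prod_univ_sum, Fintype.piFinset_univ]
    rw [h2, Finset.prod_eq_single k]
    · have hfk : ∀ v, f k v = if v = u' then P k (a k) (s k) v else 0 := by
        intro v; simp [hf]
      simp only [hfk]
      simp [Finset.sum_ite_eq']
    · intro j _ hj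
      have hfj : ∀ v, f j v = P j (a j) (s j) v := by intro v; simp [hf, hj]
      simp only [hfj]; exact hProw j (a j) (s j)
    · intro h; exact absurd (Finset.mem_univ k) h
  -- LHS
  have hL : (∑ b, θ k b u') = ∑ a, ∑ s, (if s k = u' then Φ a s else 0) := by
    simp only [hθ]
    calc (∑ b : A k, ∑ a, ∑ s, if a k = b ∧ s k = u' then Φ a s else 0)
        = ∑ a, ∑ b : A k, ∑ s, (if a k = b ∧ s k = u' then Φ a s else 0) :=
          Finset.sum_comm
      _ = ∑ a, ∑ s, ∑ b : A k, (if a k = b ∧ s k = u' then Φ a s else 0) :=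
          Finset.sum_congr rfl fun a _ => Finset.sum_comm
      _ = ∑ a, ∑ s, (if s k = u' then Φ a s else 0) := by
          refine Finset.sum_congr rfl fun a _ => Finset.sum_congr rfl fun s _ => ?_
          simp [ite_and, Finset.sum_ite_eq]
  -- RHS
  have hR : (∑ u, ∑ b, θ k b u * P k b u u')
      = ∑ a, ∑ s, Φ a s * P k (a k) (s k) u' := by
    have step1 : ∀ u b, θ k b u * P k b u u'
        = ∑ a, ∑ s, (if a k = b ∧ s k = u then Φ a s * P k (a k) (s k) u' else 0) := by
      intro u b
      rw [hθ, Finset.sum_mul]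
      refine Finset.sum_congr rfl fun a _ => ?_
      rw [Finset.sum_mul]
      refine Finset.sum_congr rfl fun s _ => ?_
      by_cases h : a k = b ∧ s k = u
      · rw [if_pos h, if_pos h, h.1, h.2]
      · simp [h]
    simp only [step1]
    calc (∑ u, ∑ b, ∑ a, ∑ s, (if a k = b ∧ s k = u then Φ a s * P k (a k) (s k) u' else 0))
        = ∑ u, ∑ a, ∑ b, ∑ s, (if a k = b ∧ s k = u then Φ a s * P k (a k) (s k) u' else 0) :=
          Finset.sum_congr rfl fun u _ => Finset.sum_comm
      _ = ∑ a, ∑ u, ∑ b, ∑ s, (if a k = b ∧ s k = u then Φ a s * P k (a k) (s k) u' else 0) :=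
          Finset.sum_comm
      _ = ∑ a, ∑ u, ∑ s, ∑ b, (if a k = b ∧ s k = u then Φ a s * P k (a k) (s k) u' else 0) :=
          Finset.sum_congr rfl fun a _ => Finset.sum_congr rfl fun u _ => Finset.sum_comm
      _ = ∑ a, ∑ s, ∑ u, ∑ b, (if a k = b ∧ s k = u then Φ a s * P k (a k) (s k) u' else 0) :=
          Finset.sum_congr rfl fun a _ => Finset.sum_comm
      _ = ∑ a, ∑ s, Φ a s * P k (a k) (s k) u' := by
          refine Finset.sum_congr rfl fun a _ => Finset.sum_congr rfl fun s _ => ?_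
          simp [ite_and, Finset.sum_ite_eq, Finset.sum_ite_eq']
  rw [hL, hR]
  calc (∑ a, ∑ s, if s k = u' then Φ a s else 0)
      = ∑ s' : ∀ j, S j, ∑ a, (if s' k = u' then Φ a s' else 0) := Finset.sum_comm
    _ = ∑ s' : ∀ j, S j, if s' k = u' then (∑ a, Φ a s') else 0 := by
        refine Finset.sum_congr rfl fun s' _ => ?_
        by_cases h : s' k = u' <;> simp [h]
    _ = ∑ s' : ∀ j, S j, if s' k = u'
          then (∑ s, ∑ a, Φ a s * ∏ j, P j (a j) (s j) (s' j)) else 0 := by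
        refine Finset.sum_congr rfl fun s' _ => ?_
        by_cases h : s' k = u' <;> simp [h, hbal s']
    _ = ∑ s' : ∀ j, S j, ∑ s, ∑ a,
          (if s' k = u' then Φ a s * ∏ j, P j (a j) (s j) (s' j) else 0) := by
        refine Finset.sum_congr rfl fun s' _ => ?_
        by_cases h : s' k = u' <;> simp [h]
    _ = ∑ s, ∑ s' : ∀ j, S j, ∑ a,
          (if s' k = u' then Φ a s * ∏ j, P j (a j) (s j) (s' j) else 0) := Finset.sum_comm
    _ = ∑ s, ∑ a, ∑ s' : ∀ j, S j,
          (if s' k = u' then Φ a s * ∏ j, P j (a j) (s j) (s' j) else 0) :=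
        Finset.sum_congr rfl fun s _ => Finset.sum_comm
    _ = ∑ s, ∑ a, Φ a s * P k (a k) (s k) u' := by
        refine Finset.sum_congr rfl fun s _ => Finset.sum_congr rfl fun a _ => ?_
        rw [← key a s, Finset.mul_sum]
        refine Finset.sum_congr rfl fun s' _ => ?_
        by_cases h : s' k = u' <;> simp [h]
    _ = ∑ a, ∑ s, Φ a s * P k (a k) (s k) u' := Finset.sum_comm
end

section
/- Let K ≥ 1, Ψ ≥ 0, and for each k ∈ {1,…,K} let d_k ≥ 1 be an integer. For each t ∈ ℕ and k ∈ {1,…,K}, let g_t^{(k)} and θ_t^{(k)} be vectors in ℝ^{d_k} with ‖g_t^{(k)}‖_∞ ≤ Ψ. Let Q : ℕ → ℝ satisfy Q(t+1) = max{Q(t) + Σ_{k=1}^K ⟨g_{t−1}^{(k)}, θ_t^{(k)}⟩, 0} for all t ≥ 1. Then for every T ≥ 1: Σ_{t=1}^{T} Σ_{k=1}^K ⟨g_{t−1}^{(k)}, θ_{t−1}^{(k)}⟩ ≤ Q(T+1) − Q(1) + Ψ · Σ_{t=1}^{T} Σ_{k=1}^K √(d_k) · ‖θ_t^{(k)} −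 θ_{t−1}^{(k)}‖₂. -/
lemma abs_sum_le_sqrt (n : ℕ) (Ψ : ℝ) (hΨ : 0 ≤ Ψ) (a b : Fin n → ℝ)
    (ha : ∀ j, |a j| ≤ Ψ) :
    |∑ j, a j * b j| ≤ Ψ * (Real.sqrt n * Real.sqrt (∑ j, (b j) ^ 2)) := by
  calc |∑ j, a j * b j| ≤ ∑ j, |a j * b j| := Finset.abs_sum_le_sum_abs _ _
    _ ≤ ∑ j, Ψ * |b j| := by
        apply Finset.sum_le_sum
        intro j _
        rw [abs_mul]
        exact mul_le_mul_of_nonneg_right (ha j) (abs_nonneg _)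
    _ = Ψ * ∑ j, |b j| := by rw [Finset.mul_sum]
    _ ≤ Ψ * (Real.sqrt n * Real.sqrt (∑ j, (b j) ^ 2)) := by
        apply mul_le_mul_of_nonneg_left _ hΨ
        have h1 : (∑ j, |b j|) ^ 2 ≤ (n : ℝ) * ∑ j, (b j) ^ 2 := by
          have := sq_sum_le_card_mul_sum_sq (s := Finset.univ) (f := fun j => |b j|)
          simpa [sq_abs] using this
        have h2 : (∑ j, |b j|) ≤ Real.sqrt ((n : ℝ) * ∑ j, (b j) ^ 2) := by
          rw [show (∑ j, |b j|) = Real.sqrt ((∑ j, |b j|) ^ 2) by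
            rw [Real.sqrt_sq (Finset.sum_nonneg fun j _ => abs_nonneg _)]]
          exact Real.sqrt_le_sqrt h1
        calc (∑ j, |b j|) ≤ Real.sqrt ((n : ℝ) * ∑ j, (b j) ^ 2) := h2
          _ = Real.sqrt n * Real.sqrt (∑ j, (b j) ^ 2) := Real.sqrt_mul (by positivity) _

/-- Virtual-queue bound on accumulated constraint costs: under the update
`Q(t+1) = max{Q(t) + Σ_k ⟨g_{t−1}^{(k)}, θ_t^{(k)}⟩, 0}` with `‖g_t^{(k)}‖_∞ ≤ Ψ`, the sum
`Σ_{t=1}^T Σ_k ⟨g_{t−1}^{(k)}, θ_{t−1}^{(k)}⟩` is bounded by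
`Q(T+1) − Q(1) + Ψ Σ_{t=1}^T Σ_k √(d_k) ‖θ_t^{(k)} − θ_{t−1}^{(k)}‖₂`. -/
theorem stmt15 (K : ℕ) (hK : 1 ≤ K) (Ψ : ℝ) (hΨ : 0 ≤ Ψ)
    (d : Fin K → ℕ) (hd : ∀ k, 1 ≤ d k)
    (g θ : ℕ → (k : Fin K) → Fin (d k) → ℝ)
    (hg : ∀ t k j, |g t k j| ≤ Ψ)
    (Q : ℕ → ℝ)
    (hQ : ∀ t, 1 ≤ t → Q (t + 1) = max (Q t + ∑ k, ∑ j, g (t - 1) k j * θ t k j) 0) :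
    ∀ T, 1 ≤ T →
      (∑ t ∈ Finset.Icc 1 T, ∑ k, ∑ j, g (t - 1) k j * θ (t - 1) k j) ≤
        Q (T + 1) - Q 1 +
          Ψ * ∑ t ∈ Finset.Icc 1 T, ∑ k,
            Real.sqrt (d k) * Real.sqrt (∑ j, (θ t k j - θ (t - 1) k j) ^ 2) := by
  intro T hT
  -- per-step bound
  have step : ∀ t ∈ Finset.Icc 1 T,
      (∑ k, ∑ j, g (t - 1) k j * θ (t - 1) k j) ≤
        (Q (t + 1) - Q t) +
          Ψ * ∑ k, Real.sqrt (d k) * Real.sqrt (∑ j, (θ t k j - θ (t - 1) k j) ^ 2) := by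
    intro t ht
    have ht1 : 1 ≤ t := (Finset.mem_Icc.mp ht).1
    have hQt : Q (t + 1) ≥ Q t + ∑ k, ∑ j, g (t - 1) k j * θ t k j := by
      rw [hQ t ht1]; exact le_max_left _ _
    have key : (∑ k, ∑ j, g (t - 1) k j * θ (t - 1) k j) -
        (∑ k, ∑ j, g (t - 1) k j * θ t k j) ≤
        Ψ * ∑ k, Real.sqrt (d k) * Real.sqrt (∑ j, (θ t k j - θ (t - 1) k j) ^ 2) := by
      rw [← Finset.sum_sub_distrib, Finset.mul_sum]
      apply Finset.sum_le_sum
      intro k _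
      rw [← Finset.sum_sub_distrib]
      have := abs_sum_le_sqrt (d k) Ψ hΨ (g (t - 1) k)
        (fun j => θ t k j - θ (t - 1) k j) (fun j => hg (t - 1) k j)
      calc (∑ j, (g (t - 1) k j * θ (t - 1) k j - g (t - 1) k j * θ t k j))
          = -(∑ j, g (t - 1) k j * (θ t k j - θ (t - 1) k j)) := by
            rw [← Finset.sum_neg_distrib]; apply Finset.sum_congr rfl; intro j _; ring
        _ ≤ |∑ j, g (t - 1) k j * (θ t k j - θ (t - 1) k j)| := neg_le_abs _
        _ ≤ _ := this
    have h1 : (∑ k, ∑ j, g (t - 1) k j * θ t k j) ≤ Q (t + 1) - Q t := by linarith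
    linarith
  -- telescoping
  have tele : (∑ t ∈ Finset.Icc 1 T, (Q (t + 1) - Q t)) = Q (T + 1) - Q 1 := by
    have : ∀ n, (∑ t ∈ Finset.Icc 1 n, (Q (t + 1) - Q t)) = Q (n + 1) - Q 1 := by
      intro n
      induction n with
      | zero => simp
      | succ m ih =>
        rw [Finset.sum_Icc_succ_top (by omega : 1 ≤ m + 1), ih]
        ring
    exact this T
  calc (∑ t ∈ Finset.Icc 1 T, ∑ k, ∑ j, g (t - 1) k j * θ (t - 1) k j)
      ≤ ∑ t ∈ Finset.Icc 1 T, ((Q (t + 1) - Q t) +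
          Ψ * ∑ k, Real.sqrt (d k) * Real.sqrt (∑ j, (θ t k j - θ (t - 1) k j) ^ 2)) :=
        Finset.sum_le_sum step
    _ = (∑ t ∈ Finset.Icc 1 T, (Q (t + 1) - Q t)) +
        ∑ t ∈ Finset.Icc 1 T, Ψ * ∑ k, Real.sqrt (d k) *
          Real.sqrt (∑ j, (θ t k j - θ (t - 1) k j) ^ 2) := Finset.sum_add_distrib
    _ = Q (T + 1) - Q 1 + Ψ * ∑ t ∈ Finset.Icc 1 T, ∑ k,
          Real.sqrt (d k) * Real.sqrt (∑ j, (θ t k j - θ (t - 1) k j) ^ 2) := by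
        rw [tele, Finset.mul_sum]
end

section
/- Let d ≥ 1, let Θ ⊆ ℝ^d be a convex set, let α > 0, V ≥ 0, m ≥ 1, let f, g_1, …, g_m ∈ ℝ^d, let Q_1, …, Q_m ≥ 0, and let b ∈ Θ. Suppose θ* ∈ Θ minimizes the function θ ↦ V·⟨f, θ − b⟩ + Σ_{i=1}^m Q_i·⟨g_i, θ⟩ + α·‖θ − b‖₂² over Θ. Then ‖θ* − b‖₂ ≤ (V·‖f‖₂ + ‖Q‖₂·√(Σ_{i=1}^m ‖g_i‖₂²)) / (2α), where ‖Q‖₂ = √(Σ_{i=1}^m Q_i²). -/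
open scoped RealInnerProductSpace

/-- Slow-update property: the minimizer `θ*` of the per-slot objective
`V⟨f, θ − b⟩ + Σ_i Q_i⟨g_i, θ⟩ + α‖θ − b‖²` over the convex set `Θ ∋ b` with `Q_i ≥ 0`
stays within distance `(V‖f‖ + ‖Q‖₂ √(Σ_i ‖g_i‖²))/(2α)` of `b`. -/
theorem stmt18 (d : ℕ) (hd : 1 ≤ d)
    (Θ : Set (EuclideanSpace ℝ (Fin d))) (hΘ : Convex ℝ Θ)
    (α V : ℝ) (hα : 0 < α) (hV : 0 ≤ V)
    (m : ℕ) (hm : 1 ≤ m)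
    (f : EuclideanSpace ℝ (Fin d)) (g : Fin m → EuclideanSpace ℝ (Fin d))
    (Q : Fin m → ℝ) (hQnn : ∀ i, 0 ≤ Q i)
    (b : EuclideanSpace ℝ (Fin d)) (hb : b ∈ Θ)
    (θs : EuclideanSpace ℝ (Fin d)) (hθs : θs ∈ Θ)
    (hmin : ∀ θ ∈ Θ,
      V * ⟪f, θs - b⟫ + (∑ i, Q i * ⟪g i, θs⟫) + α * ‖θs - b‖ ^ 2 ≤
      V * ⟪f, θ - b⟫ + (∑ i, Q i * ⟪g i, θ⟫) + α * ‖θ - b‖ ^ 2) :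
    ‖θs - b‖ ≤
      (V * ‖f‖ + Real.sqrt (∑ i, Q i ^ 2) * Real.sqrt (∑ i, ‖g i‖ ^ 2)) / (2 * α) := by
  set x : EuclideanSpace ℝ (Fin d) := θs - b with hxdef
  set L : ℝ := V * ⟪f, b - θs⟫ + ∑ i, Q i * ⟪g i, b - θs⟫ with hLdef
  -- key inequality from testing θ = θs + lam • (b - θs)
  have key : ∀ lam : ℝ, 0 < lam → lam ≤ 1 → α * (2 - lam) * ‖x‖ ^ 2 ≤ L := by
    intro lam h0 h1
    have hmem : θs + lam • (b - θs) ∈ Θ := by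
      have h := hΘ hθs hb (by linarith : (0:ℝ) ≤ 1 - lam) h0.le (by ring)
      convert h using 1
      module
    have h := hmin _ hmem
    have hdiff : θs + lam • (b - θs) - b = (1 - lam) • x := by
      rw [hxdef]; module
    rw [hdiff] at h
    have hA : ⟪f, (1 - lam) • x⟫ = (1 - lam) * ⟪f, x⟫ := real_inner_smul_right _ _ _
    have hB : ‖(1 - lam) • x‖ ^ 2 = (1 - lam) ^ 2 * ‖x‖ ^ 2 := by
      rw [norm_smul, mul_pow, Real.norm_eq_abs, sq_abs]
    have hC : ⟪f, b - θs⟫ = -⟪f, x⟫ := by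
      rw [hxdef, ← inner_neg_right]; congr 1; module
    have hsum : ∑ i, Q i * ⟪g i, θs + lam • (b - θs)⟫ =
        (∑ i, Q i * ⟪g i, θs⟫) + lam * ∑ i, Q i * ⟪g i, b - θs⟫ := by
      rw [Finset.mul_sum, ← Finset.sum_add_distrib]
      refine Finset.sum_congr rfl fun i _ => ?_
      rw [inner_add_right, real_inner_smul_right]; ring
    rw [hA, hB, hsum] at h
    have h2 : lam * (α * (2 - lam) * ‖x‖ ^ 2) ≤ lam * L := by
      rw [hLdef, hC]; nlinarith [h]
    exact le_of_mul_le_mul_left h2 h0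
  have hxn : (0:ℝ) ≤ ‖x‖ := norm_nonneg _
  have hRHSnn : 0 ≤ (V * ‖f‖ + Real.sqrt (∑ i, Q i ^ 2) * Real.sqrt (∑ i, ‖g i‖ ^ 2)) / (2 * α) := by
    apply div_nonneg _ (by linarith)
    have : 0 ≤ V * ‖f‖ := mul_nonneg hV (norm_nonneg _)
    have h2 : 0 ≤ Real.sqrt (∑ i, Q i ^ 2) * Real.sqrt (∑ i, ‖g i‖ ^ 2) :=
      mul_nonneg (Real.sqrt_nonneg _) (Real.sqrt_nonneg _)
    linarith
  rcases eq_or_lt_of_le hxn with h0 | h0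
  · rw [← h0]; exact hRHSnn
  -- limit lam → 0⁺ gives 2α‖x‖² ≤ L
  have hten : Filter.Tendsto (fun lam : ℝ => α * (2 - lam) * ‖x‖ ^ 2)
      (nhdsWithin 0 (Set.Ioi 0)) (nhds (α * (2 - 0) * ‖x‖ ^ 2)) := by
    apply Filter.Tendsto.mono_left _ nhdsWithin_le_nhds
    exact Continuous.tendsto (by continuity) 0
  have h2key : α * (2 - 0) * ‖x‖ ^ 2 ≤ L := by
    refine le_of_tendsto hten ?_
    filter_upwards [Ioc_mem_nhdsGT_of_mem ⟨le_refl (0:ℝ), zero_lt_one⟩] with lam hlam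
    exact key lam hlam.1 hlam.2
  -- bound L
  have hLb : L ≤ (V * ‖f‖ + Real.sqrt (∑ i, Q i ^ 2) * Real.sqrt (∑ i, ‖g i‖ ^ 2)) * ‖x‖ := by
    have hnbs : ‖b - θs‖ = ‖x‖ := by rw [hxdef, norm_sub_rev]
    have hf : ⟪f, b - θs⟫ ≤ ‖f‖ * ‖x‖ := by
      calc ⟪f, b - θs⟫ ≤ ‖f‖ * ‖b - θs‖ := real_inner_le_norm _ _
      _ = ‖f‖ * ‖x‖ := by rw [hnbs]
    have hg : ∑ i, Q i * ⟪g i, b - θs⟫ ≤ (∑ i, Q i * ‖g i‖) * ‖x‖ := by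
      rw [Finset.sum_mul]
      refine Finset.sum_le_sum fun i _ => ?_
      have := real_inner_le_norm (g i) (b - θs)
      rw [hnbs] at this
      calc Q i * ⟪g i, b - θs⟫ ≤ Q i * (‖g i‖ * ‖x‖) :=
        mul_le_mul_of_nonneg_left this (hQnn i)
      _ = Q i * ‖g i‖ * ‖x‖ := by ring
    have hCS : (∑ i, Q i * ‖g i‖) ≤
        Real.sqrt (∑ i, Q i ^ 2) * Real.sqrt (∑ i, ‖g i‖ ^ 2) :=
      Real.sum_mul_le_sqrt_mul_sqrt _ _ _
    have hCS' : (∑ i, Q i * ‖g i‖) * ‖x‖ ≤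
        Real.sqrt (∑ i, Q i ^ 2) * Real.sqrt (∑ i, ‖g i‖ ^ 2) * ‖x‖ :=
      mul_le_mul_of_nonneg_right hCS hxn
    rw [hLdef]
    nlinarith [mul_le_mul_of_nonneg_left hf hV]
  -- conclude
  rw [le_div_iff₀ (by linarith : (0:ℝ) < 2 * α)]
  have hfinal : 2 * α * ‖x‖ ^ 2 ≤
      (V * ‖f‖ + Real.sqrt (∑ i, Q i ^ 2) * Real.sqrt (∑ i, ‖g i‖ ^ 2)) * ‖x‖ := by
    calc 2 * α * ‖x‖ ^ 2 = α * (2 - 0) * ‖x‖ ^ 2 := by ring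
    _ ≤ L := h2key
    _ ≤ _ := hLb
  nlinarith [hfinal, h0]
end

section
/- Let d ≥ 1 and m ≥ 1, let X ⊆ ℝ^d be a nonempty convex set, let w, u_1, …, u_m ∈ ℝ^d, and let M > 0 satisfy |⟨w, x⟩| ≤ M for all x ∈ X. Assume Slater's condition: there exist η > 0 and x̃ ∈ X with ⟨u_i, x̃⟩ ≤ −η for all i ∈ {1,…,m}. Let x* ∈ X be a minimizer of x ↦ ⟨w, x⟩ over the set {x ∈ X : ⟨u_i, x⟩ ≤ 0 for all i}. Then for every ε ≥ 0 and every x̄ ∈ X with ⟨u_i, x̄⟩ ≤ ε for all i, one has ⟨w, x̄⟩ ≥ ⟨w, x*⟩ − ε·(2·√m·M)/η. -/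
open scoped RealInnerProductSpace

/-- Perturbation bound for a linear program over a convex set under Slater's condition:
if `x*` minimizes `⟨w, ·⟩` over `{x ∈ X : ⟨u_i, x⟩ ≤ 0 ∀i}`, `|⟨w, x⟩| ≤ M` on `X`, and
there is `x̃ ∈ X` with `⟨u_i, x̃⟩ ≤ −η`, then every `ε`-feasible `x̄ ∈ X` satisfies
`⟨w, x̄⟩ ≥ ⟨w, x*⟩ − ε·(2√m·M)/η`. -/
theorem stmt19 (d m : ℕ) (hd : 1 ≤ d) (hm : 1 ≤ m)
    (X : Set (EuclideanSpace ℝ (Fin d))) (hX : X.Nonempty) (hXconv : Convex ℝ X)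
    (w : EuclideanSpace ℝ (Fin d)) (u : Fin m → EuclideanSpace ℝ (Fin d))
    (M : ℝ) (hM : 0 < M) (hbound : ∀ x ∈ X, |⟪w, x⟫| ≤ M)
    (η : ℝ) (hη : 0 < η)
    (xt : EuclideanSpace ℝ (Fin d)) (hxt : xt ∈ X)
    (hslater : ∀ i, ⟪u i, xt⟫ ≤ -η)
    (xs : EuclideanSpace ℝ (Fin d)) (hxs : xs ∈ X)
    (hxsfeas : ∀ i, ⟪u i, xs⟫ ≤ 0)
    (hxsmin : ∀ x ∈ X, (∀ i, ⟪u i, x⟫ ≤ 0) → ⟪w, xs⟫ ≤ ⟪w, x⟫) :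
    ∀ ε : ℝ, 0 ≤ ε → ∀ xb ∈ X, (∀ i, ⟪u i, xb⟫ ≤ ε) →
      ⟪w, xs⟫ - ε * (2 * Real.sqrt m * M) / η ≤ ⟪w, xb⟫ := by
  intro ε hε xb hxb hxbfeas
  have hεη : 0 < ε + η := by linarith
  set θ : ℝ := ε / (ε + η) with hθdef
  have hθ0 : 0 ≤ θ := by positivity
  have hθε : θ * (ε + η) = ε := div_mul_cancel₀ ε hεη.ne'
  have hθ1 : θ ≤ 1 := by
    rw [hθdef, div_le_one hεη]; linarith
  set z : EuclideanSpace ℝ (Fin d) := (1 - θ) • xb + θ • xt with hz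
  have hzX : z ∈ X := hXconv hxb hxt (by linarith) hθ0 (by ring)
  have hzfeas : ∀ i, ⟪u i, z⟫ ≤ 0 := by
    intro i
    have h1 := hxbfeas i
    have h2 := hslater i
    rw [hz, inner_add_right, real_inner_smul_right, real_inner_smul_right]
    nlinarith [mul_le_mul_of_nonneg_left h1 (by linarith : (0:ℝ) ≤ 1 - θ),
      mul_le_mul_of_nonneg_left h2 hθ0]
  have hmin := hxsmin z hzX hzfeas
  rw [hz, inner_add_right, real_inner_smul_right, real_inner_smul_right] at hmin
  have hs : (1:ℝ) ≤ Real.sqrt m := by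
    rw [show (1:ℝ) = Real.sqrt 1 from Real.sqrt_one.symm]
    exact Real.sqrt_le_sqrt (by exact_mod_cast hm)
  have hMt := abs_le.1 (hbound xt hxt)
  have hMb := abs_le.1 (hbound xb hxb)
  have hθη : θ * η ≤ ε := by nlinarith
  rw [sub_le_iff_le_add, ← sub_le_iff_le_add', le_div_iff₀ hη]
  have h1 : ⟪w, xs⟫ - ⟪w, xb⟫ ≤ θ * (⟪w, xt⟫ - ⟪w, xb⟫) := by nlinarith
  have h2 : θ * (⟪w, xt⟫ - ⟪w, xb⟫) ≤ θ * (2 * M) :=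
    mul_le_mul_of_nonneg_left (by linarith [hMt.2, hMb.1]) hθ0
  have h3 : (⟪w, xs⟫ - ⟪w, xb⟫) * η ≤ θ * (2 * M) * η :=
    mul_le_mul_of_nonneg_right (h1.trans h2) hη.le
  have h4 : θ * (2 * M) * η ≤ ε * (2 * M) := by nlinarith
  have h5 : ε * (2 * M) ≤ ε * (2 * Real.sqrt m * M) := by nlinarith [mul_nonneg (mul_nonneg hε hM.le) (sub_nonneg.2 hs)]
  linarith
end
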